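/- (Optimality of the reverse radial Gauss map) Let μ be a Borel probability measure on Ω_{C°} vanishing on sets of Hausdorff dimension n−2, let ν be a Borel probability measure on Ω_C, and let K be a C-pseudo-cone whose reverse radial Gauss map α*_K (defined μ-a.e.) pushes μ forward to ν. Then for every measurable map T : Ω_{C°} → Ω_C (defined μ-a.e.) with T#μ = ν, ∫ log|⟨u, α*_K(u)⟩| dμ(u) ≤ ∫ log|⟨u, T(u)⟩| dμ(u). -/

import Mathlib

open Set Metric MeasureTheory
open scoped InnerProductSpace Pointwise ENNReal

noncomputable section

abbrev E (n : ℕ) := EuclideanSpace ℝ (Fin n)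

/-- The dual cone `C° = {x : ⟪x,y⟫ ≤ 0 ∀ y ∈ C}`. -/
def dualCone {n : ℕ} (C : Set (E n)) : Set (E n) := {x | ∀ y ∈ C, ⟪x, y⟫_ℝ ≤ 0}

/-- `Ω_C = S^{n-1} ∩ int C`. -/
def OmegaC {n : ℕ} (C : Set (E n)) : Set (E n) := sphere (0 : E n) 1 ∩ interior C

/-- `Ω_{C°} = S^{n-1} ∩ int C°`. -/
def OmegaCp {n : ℕ} (C : Set (E n)) : Set (E n) := sphere (0 : E n) 1 ∩ interior (dualCone C)

/-- `C` is a closed convex pointed cone with nonempty interior. -/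
structure IsPointedCone {n : ℕ} (C : Set (E n)) : Prop where
  closed : IsClosed C
  convex : Convex ℝ C
  cone : ∀ r : ℝ, 0 ≤ r → ∀ x ∈ C, r • x ∈ C
  pointed : C ∩ (-C) = {(0 : E n)}
  intNonempty : (interior C).Nonempty

/-- `K` is a `C`-pseudo-cone: nonempty, closed, convex, `0 ∉ K`, `K + C = K ⊆ C`. -/
def IsPseudoCone {n : ℕ} (C K : Set (E n)) : Prop :=
  K.Nonempty ∧ IsClosed K ∧ Convex ℝ K ∧ (0 : E n) ∉ K ∧ K + C = K ∧ K ⊆ C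

/-- The support function `h_K(u) = sup {⟪u,y⟫ : y ∈ K}`. -/
def suppFn {n : ℕ} (K : Set (E n)) (u : E n) : ℝ := sSup ((fun y => ⟪u, y⟫_ℝ) '' K)

/-- The radial function `ρ_K(v) = min {r > 0 : r v ∈ K}`. -/
def radialFn {n : ℕ} (K : Set (E n)) (v : E n) : ℝ := sInf {r : ℝ | 0 < r ∧ r • v ∈ K}

/-- `u` is an outer normal vector of `K` at `x`. -/
def IsNormalAt {n : ℕ} (K : Set (E n)) (u x : E n) : Prop :=
  x ∈ K ∧ ∀ y ∈ K, ⟪u, y⟫_ℝ ≤ ⟪u, x⟫_ℝ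

/-- The pseudo-subdifferential `∂•K`. -/
def pseudoSubdiff {n : ℕ} (C K : Set (E n)) : Set (E n × E n) :=
  {p | p.1 ∈ OmegaC C ∧ p.2 ∈ OmegaCp C ∧ IsNormalAt K p.2 (radialFn K p.1 • p.1)}

/-- Integral with values in `[-∞,∞]`: positive part minus negative part. -/
def eIntegral {n : ℕ} (μ : Measure (E n)) (f : E n → ℝ) : EReal :=
  ((∫⁻ x, ENNReal.ofReal (f x) ∂μ : ℝ≥0∞) : EReal) -
    ((∫⁻ x, ENNReal.ofReal (-f x) ∂μ : ℝ≥0∞) : EReal)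

/-! The pointwise inequality `−h_K(u) ≤ ρ_K(v) |⟪u, v⟫|`, with equality at `v = α*_K(u)`, reads
`−log |⟪u, v⟫| ≤ log ρ_K(v) − log(−h_K(u))`: the pair `(log ρ_K, log(−h_K))` is a dual pair of
potentials for the cost `−log |⟪u, v⟫|` which is tight along `α*_K`. Integrating against `μ` and
using `T#μ = α*_K#μ` for the `ρ_K` term gives the claim. Nothing need be integrable: since
`log ρ_K ≥ log dist(0, K)` and `log(−h_K) ≤ log ‖y‖` for any `y ∈ K`, after shifting by these
constants every term is a nonnegative lower integral. -/

open Filter Topology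

theorem lintegral_ofReal_le_of_map_eq {X Y : Type*} [MeasurableSpace X] [MeasurableSpace Y]
    {μ : Measure X} [IsFiniteMeasure μ] {α T : X → Y} (hα : Measurable α)
    (hT : Measurable T) (hmap : μ.map T = μ.map α) {φ : Y → ℝ} (hφ : Measurable φ)
    {ψ f g : X → ℝ} {k : ℝ} (hk : 0 ≤ k)
    (hf : ∀ᵐ x ∂μ, 0 ≤ f x ∧ f x + k ≤ φ (T x) + ψ x)
    (hg : ∀ᵐ x ∂μ, 0 ≤ φ (α x) ∧ 0 ≤ ψ x ∧ φ (α x) + ψ x ≤ g x + k) :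
    ∫⁻ x, ENNReal.ofReal (f x) ∂μ ≤ ∫⁻ x, ENNReal.ofReal (g x) ∂μ := by
  have hΦ : Measurable fun y => ENNReal.ofReal (φ y) := hφ.ennreal_ofReal
  have hκ : ENNReal.ofReal k * μ univ ≠ ⊤ :=
    ENNReal.mul_ne_top ENNReal.ofReal_ne_top (measure_ne_top μ univ)
  have hmap' : ∫⁻ x, ENNReal.ofReal (φ (T x)) ∂μ = ∫⁻ x, ENNReal.ofReal (φ (α x)) ∂μ := by
    rw [← lintegral_map hΦ hT, hmap, lintegral_map hΦ hα]
  refine (ENNReal.add_le_add_iff_right hκ).mp ?_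
  calc ∫⁻ x, ENNReal.ofReal (f x) ∂μ + ENNReal.ofReal k * μ univ
      = ∫⁻ x, (ENNReal.ofReal (f x) + ENNReal.ofReal k) ∂μ := by
        rw [lintegral_add_right _ measurable_const, lintegral_const]
    _ ≤ ∫⁻ x, (ENNReal.ofReal (φ (T x)) + ENNReal.ofReal (ψ x)) ∂μ := by
        refine lintegral_mono_ae (hf.mono fun x ⟨hf0, hfk⟩ => ?_)
        rw [← ENNReal.ofReal_add hf0 hk]
        exact (ENNReal.ofReal_le_ofReal hfk).trans ENNReal.ofReal_add_le
    _ = ∫⁻ x, (ENNReal.ofReal (φ (α x)) + ENNReal.ofReal (ψ x)) ∂μ := by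
        rw [lintegral_add_left (f := fun x => ENNReal.ofReal (φ (T x))) (hΦ.comp hT),
          lintegral_add_left (f := fun x => ENNReal.ofReal (φ (α x))) (hΦ.comp hα)]
        exact congrArg (· + _) hmap'
    _ ≤ ∫⁻ x, (ENNReal.ofReal (g x) + ENNReal.ofReal k) ∂μ := by
        refine lintegral_mono_ae (hg.mono fun x ⟨hφ0, hψ0, hgk⟩ => ?_)
        rw [← ENNReal.ofReal_add hφ0 hψ0]
        exact (ENNReal.ofReal_le_ofReal hgk).trans ENNReal.ofReal_add_le
    _ = ∫⁻ x, ENNReal.ofReal (g x) ∂μ + ENNReal.ofReal k * μ univ := by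
        rw [lintegral_add_right _ measurable_const, lintegral_const]

theorem eIntegral_of_ae_nonpos {n : ℕ} {μ : Measure (E n)} {f : E n → ℝ}
    (hf : ∀ᵐ x ∂μ, f x ≤ 0) :
    eIntegral μ f = -((∫⁻ x, ENNReal.ofReal (-f x) ∂μ : ℝ≥0∞) : EReal) := by
  rw [eIntegral, lintegral_congr_ae (hf.mono fun x hx => ENNReal.ofReal_of_nonpos hx),
    lintegral_zero, EReal.coe_ennreal_zero, zero_sub]

theorem log_abs_inner_nonpos {F : Type*} [NormedAddCommGroup F] [InnerProductSpace ℝ F]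
    {u v : F} (hu : u ∈ sphere (0 : F) 1) (hv : v ∈ sphere (0 : F) 1) :
    Real.log |⟪u, v⟫_ℝ| ≤ 0 := by
  refine Real.log_nonpos (abs_nonneg _) ?_
  simpa [mem_sphere_zero_iff_norm.mp hu, mem_sphere_zero_iff_norm.mp hv]
    using abs_real_inner_le_norm u v

theorem ne_zero_of_mem_OmegaC {n : ℕ} {C : Set (E n)} {v : E n} (hv : v ∈ OmegaC C) : v ≠ 0 :=
  ne_zero_of_mem_sphere one_ne_zero ⟨v, hv.1⟩

theorem infDist_zero_le_norm {F : Type*} [SeminormedAddCommGroup F] {s : Set F} {y : F}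
    (hy : y ∈ s) : infDist (0 : F) s ≤ ‖y‖ := by
  simpa using infDist_le_dist_of_mem (x := (0 : F)) hy

variable {n : ℕ} {C K : Set (E n)}

theorem IsPseudoCone.isClosed (hK : IsPseudoCone C K) : IsClosed K := hK.2.1

theorem IsPseudoCone.zero_notMem (hK : IsPseudoCone C K) : (0 : E n) ∉ K := hK.2.2.2.1

theorem IsPseudoCone.add_cone_eq (hK : IsPseudoCone C K) : K + C = K := hK.2.2.2.2.1

theorem IsPseudoCone.subset (hK : IsPseudoCone C K) : K ⊆ C := hK.2.2.2.2.2

theorem inner_neg_of_mem_interior_dualCone {u y : E n} (hu : u ∈ interior (dualCone C))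
    (hy : y ∈ C) (hy0 : y ≠ 0) : ⟪u, y⟫_ℝ < 0 := by
  have hlim : Tendsto (fun t : ℝ => u + t • y) (𝓝 0) (𝓝 u) := by
    simpa using (show Continuous fun t : ℝ => u + t • y by fun_prop).tendsto 0
  have hev : ∀ᶠ t in 𝓝[>] (0 : ℝ), u + t • y ∈ dualCone C :=
    nhdsWithin_le_nhds (hlim.eventually (mem_interior_iff_mem_nhds.mp hu))
  obtain ⟨t, htC, ht⟩ := (hev.and self_mem_nhdsWithin).exists
  have h := htC y hy
  rw [inner_add_left, real_inner_smul_left, real_inner_self_eq_norm_sq] at h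
  have : 0 < t * ‖y‖ ^ 2 := mul_pos ht (by positivity)
  linarith

theorem IsPseudoCone.infDist_pos (hK : IsPseudoCone C K) : 0 < infDist (0 : E n) K :=
  (hK.isClosed.notMem_iff_infDist_pos hK.1).mp hK.zero_notMem

theorem IsPseudoCone.exists_smul_mem (hC : IsPointedCone C) (hK : IsPseudoCone C K) {v : E n}
    (hv : v ∈ interior C) : ∃ r : ℝ, 0 < r ∧ r • v ∈ K := by
  obtain ⟨⟨x₀, hx₀⟩, -, -, -, hKC, -⟩ := hK
  have hlim : Tendsto (fun t : ℝ => v - t • x₀) (𝓝 0) (𝓝 v) := by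
    simpa using (show Continuous fun t : ℝ => v - t • x₀ by fun_prop).tendsto 0
  have hev : ∀ᶠ t in 𝓝[>] (0 : ℝ), v - t • x₀ ∈ C :=
    nhdsWithin_le_nhds (hlim.eventually (mem_interior_iff_mem_nhds.mp hv))
  obtain ⟨t, htC, ht⟩ := (hev.and self_mem_nhdsWithin).exists
  refine ⟨t⁻¹, inv_pos.mpr ht, ?_⟩
  have h := hKC ▸ add_mem_add hx₀ (hC.cone t⁻¹ (inv_nonneg.mpr ht.le) _ htC)
  simpa [smul_sub, smul_smul, inv_mul_cancel₀ ht.ne'] using h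

theorem IsPseudoCone.radialFn_mem (hC : IsPointedCone C) (hK : IsPseudoCone C K) {v : E n}
    (hv : v ∈ interior C) (hv0 : v ≠ 0) : radialFn K v ∈ {r : ℝ | 0 < r ∧ r • v ∈ K} := by
  set S := {r : ℝ | 0 < r ∧ r • v ∈ K}
  have hnv : 0 < ‖v‖ := norm_pos_iff.mpr hv0
  have hlb : ∀ r ∈ S, infDist (0 : E n) K / ‖v‖ ≤ r := fun r hr => by
    have := infDist_zero_le_norm hr.2
    rw [norm_smul, Real.norm_of_nonneg hr.1.le] at this
    rwa [div_le_iff₀ hnv]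
  have hS : S = (fun r : ℝ => r • v) ⁻¹' K ∩ Ici (infDist (0 : E n) K / ‖v‖) := by
    ext r
    exact ⟨fun hr => ⟨hr.2, hlb r hr⟩,
      fun hr => ⟨(div_pos hK.infDist_pos hnv).trans_le hr.2, hr.1⟩⟩
  have hSclosed : IsClosed S := hS ▸ (hK.isClosed.preimage (by fun_prop)).inter isClosed_Ici
  exact hSclosed.csInf_mem (hK.exists_smul_mem hC hv) ⟨_, hlb⟩

theorem IsPseudoCone.radialFn_le_iff (hC : IsPointedCone C) (hK : IsPseudoCone C K) {v : E n}
    (hv : v ∈ interior C) (hv0 : v ≠ 0) (t : ℝ) :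
    radialFn K v ≤ t ↔ 0 < t ∧ t • v ∈ K := by
  obtain ⟨hpos, hmem⟩ := hK.radialFn_mem hC hv hv0
  refine ⟨fun ht => ⟨hpos.trans_le ht, ?_⟩, fun ht => csInf_le ⟨0, fun r hr => hr.1.le⟩ ht⟩
  have hC' : (t - radialFn K v) • v ∈ C := hC.cone _ (sub_nonneg.mpr ht) v (interior_subset hv)
  have h := hK.add_cone_eq ▸ add_mem_add hmem hC'
  rwa [← add_smul, add_sub_cancel] at h

theorem IsPseudoCone.infDist_le_radialFn (hC : IsPointedCone C) (hK : IsPseudoCone C K)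
    {v : E n} (hv : v ∈ OmegaC C) : infDist (0 : E n) K ≤ radialFn K v := by
  obtain ⟨hpos, hmem⟩ := hK.radialFn_mem hC hv.2 (ne_zero_of_mem_OmegaC hv)
  simpa [norm_smul, Real.norm_of_nonneg hpos.le, mem_sphere_zero_iff_norm.mp hv.1]
    using infDist_zero_le_norm hmem

theorem measurableSet_OmegaC : MeasurableSet (OmegaC C) :=
  isClosed_sphere.measurableSet.inter isOpen_interior.measurableSet

theorem IsPseudoCone.measurable_indicator_radialFn (hC : IsPointedCone C)
    (hK : IsPseudoCone C K) : Measurable ((OmegaC C).indicator (radialFn K)) := by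
  refine measurable_of_Iic fun t => ?_
  have hKt : MeasurableSet {v : E n | 0 < t ∧ t • v ∈ K} := by
    by_cases ht : 0 < t
    · simp only [ht, true_and]
      exact (hK.isClosed.preimage (continuous_const_smul t)).measurableSet
    · simp [ht]
  have h : (OmegaC C).indicator (radialFn K) ⁻¹' Iic t =
      (OmegaC C ∩ {v | 0 < t ∧ t • v ∈ K}) ∪ ((OmegaC C)ᶜ ∩ {_v | 0 ≤ t}) := by
    ext v
    by_cases hv : v ∈ OmegaC C
    · simp [hv, hK.radialFn_le_iff hC hv.2 (ne_zero_of_mem_OmegaC hv)]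
    · simp [hv]
  rw [h]
  exact (measurableSet_OmegaC.inter hKt).union
    (measurableSet_OmegaC.compl.inter (MeasurableSet.const _))

theorem suppFn_eq_of_isNormalAt {u x : E n} (hN : IsNormalAt K u x) : suppFn K u = ⟪u, x⟫_ℝ :=
  IsGreatest.csSup_eq ⟨⟨x, hN.1, rfl⟩, by rintro _ ⟨y, hy, rfl⟩; exact hN.2 y hy⟩

theorem bddAbove_inner_image {u : E n} (hu : u ∈ dualCone C) (hKC : K ⊆ C) :
    BddAbove ((fun y => ⟪u, y⟫_ℝ) '' K) :=
  ⟨0, by rintro _ ⟨y, hy, rfl⟩; exact hu y (hKC hy)⟩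

theorem IsPseudoCone.neg_suppFn_le_norm (hK : IsPseudoCone C K) {u y : E n}
    (hu : u ∈ dualCone C) (hy : y ∈ K) : -suppFn K u ≤ ‖u‖ * ‖y‖ := by
  have h : ⟪u, y⟫_ℝ ≤ suppFn K u := le_csSup (bddAbove_inner_image hu hK.subset) ⟨y, hy, rfl⟩
  linarith [neg_le_of_abs_le (abs_real_inner_le_norm u y)]

theorem IsPseudoCone.neg_suppFn_pos (hK : IsPseudoCone C K) {u x : E n}
    (hu : u ∈ interior (dualCone C)) (hN : IsNormalAt K u x) : 0 < -suppFn K u := by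
  rw [suppFn_eq_of_isNormalAt hN, neg_pos]
  exact inner_neg_of_mem_interior_dualCone hu (hK.subset hN.1)
    (fun h => hK.zero_notMem (h ▸ hN.1))

theorem IsPseudoCone.neg_suppFn_le (hC : IsPointedCone C) (hK : IsPseudoCone C K) {u v : E n}
    (hu : u ∈ dualCone C) (hv : v ∈ interior C) (hv0 : v ≠ 0) :
    -suppFn K u ≤ radialFn K v * |⟪u, v⟫_ℝ| := by
  have hmem := (hK.radialFn_mem hC hv hv0).2
  have h : ⟪u, radialFn K v • v⟫_ℝ ≤ suppFn K u :=
    le_csSup (bddAbove_inner_image hu hK.subset) ⟨_, hmem, rfl⟩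
  rw [real_inner_smul_right] at h
  rw [abs_of_nonpos (hu v (interior_subset hv))]
  linarith

theorem neg_suppFn_eq_of_isNormalAt {u v : E n} (hu : u ∈ dualCone C) (hv : v ∈ C)
    (hN : IsNormalAt K u (radialFn K v • v)) : -suppFn K u = radialFn K v * |⟪u, v⟫_ℝ| := by
  rw [suppFn_eq_of_isNormalAt hN, real_inner_smul_right, abs_of_nonpos (hu v hv)]
  ring

theorem IsPseudoCone.log_neg_suppFn_le (hC : IsPointedCone C) (hK : IsPseudoCone C K)
    {u v : E n} (hu : u ∈ dualCone C) (hv : v ∈ OmegaC C) (hh : 0 < -suppFn K u) :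
    Real.log (-suppFn K u) ≤ Real.log (radialFn K v) + Real.log |⟪u, v⟫_ℝ| := by
  have hv0 := ne_zero_of_mem_OmegaC hv
  have hle := hK.neg_suppFn_le hC hu hv.2 hv0
  have hρ := (hK.radialFn_mem hC hv.2 hv0).1
  have hinner : 0 < |⟪u, v⟫_ℝ| := pos_of_mul_pos_right (hh.trans_le hle) hρ.le
  rw [← Real.log_mul hρ.ne' hinner.ne']
  exact Real.log_le_log hh hle

theorem IsPseudoCone.log_neg_suppFn_eq (hK : IsPseudoCone C K) {u v : E n}
    (hu : u ∈ interior (dualCone C)) (hv : v ∈ C) (hN : IsNormalAt K u (radialFn K v • v)) :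
    Real.log (-suppFn K u) = Real.log (radialFn K v) + Real.log |⟪u, v⟫_ℝ| := by
  have hh := hK.neg_suppFn_pos hu hN
  rw [neg_suppFn_eq_of_isNormalAt (interior_subset hu) hv hN] at hh ⊢
  exact Real.log_mul (left_ne_zero_of_mul hh.ne') (right_ne_zero_of_mul hh.ne')

theorem stmt17_general {n : ℕ} (C K : Set (E n)) (hC : IsPointedCone C) (hK : IsPseudoCone C K)
    (μ ν : Measure (E n)) [IsProbabilityMeasure μ]
    (hμsupp : μ (OmegaCp C)ᶜ = 0)
    (α : E n → E n) (hαmeas : Measurable α) (hαmap : Measure.map α μ = ν)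
    (hα : ∀ᵐ u ∂μ, α u ∈ OmegaC C ∧ IsNormalAt K u (radialFn K (α u) • α u))
    (T : E n → E n) (hTmeas : Measurable T) (hTmap : Measure.map T μ = ν)
    (hT : ∀ᵐ u ∂μ, T u ∈ OmegaC C) :
    eIntegral μ (fun u => Real.log |⟪u, α u⟫_ℝ|) ≤
      eIntegral μ (fun u => Real.log |⟪u, T u⟫_ℝ|) := by
  obtain ⟨y₀, hy₀⟩ := hK.1
  set a := Real.log (infDist (0 : E n) K)
  set m := Real.log ‖y₀‖
  have hgood : ∀ᵐ u ∂μ, u ∈ OmegaCp C ∧ (α u ∈ OmegaC C ∧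
      IsNormalAt K u (radialFn K (α u) • α u)) ∧ T u ∈ OmegaC C := by
    filter_upwards [mem_ae_iff.mpr hμsupp, hα, hT] with u hu hαu hTu using ⟨hu, hαu, hTu⟩
  rw [eIntegral_of_ae_nonpos (hgood.mono fun u h => log_abs_inner_nonpos h.1.1 h.2.1.1.1),
    eIntegral_of_ae_nonpos (hgood.mono fun u h => log_abs_inner_nonpos h.1.1 h.2.2.1),
    EReal.neg_le_neg_iff, EReal.coe_ennreal_le_coe_ennreal_iff]
  -- `ρ_K` is only controlled on `Ω_C`, which carries both `T#μ` and `α#μ`; off it, take `0`.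
  refine lintegral_ofReal_le_of_map_eq hαmeas hTmeas (hTmap.trans hαmap.symm)
    (φ := fun v => Real.log ((OmegaC C).indicator (radialFn K) v) - a)
    (ψ := fun u => m - Real.log (-suppFn K u)) (k := m - a)
    ((Real.measurable_log.comp (hK.measurable_indicator_radialFn hC)).sub_const a)
    (sub_nonneg.mpr (Real.log_le_log hK.infDist_pos (infDist_zero_le_norm hy₀))) ?_ ?_
  all_goals
    filter_upwards [hgood] with u ⟨hu, ⟨hαu, hN⟩, hTu⟩
    have hh := hK.neg_suppFn_pos hu.2 hN
  · have hlog := hK.log_neg_suppFn_le hC (interior_subset hu.2) hTu hh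
    rw [Set.indicator_of_mem hTu]
    exact ⟨neg_nonneg.mpr (log_abs_inner_nonpos hu.1 hTu.1), by linarith⟩
  · have hlog := hK.log_neg_suppFn_eq hu.2 (interior_subset hαu.2) hN
    have hbound : -suppFn K u ≤ ‖y₀‖ := by
      simpa [mem_sphere_zero_iff_norm.mp hu.1] using
        hK.neg_suppFn_le_norm (interior_subset hu.2) hy₀
    rw [Set.indicator_of_mem hαu]
    refine ⟨sub_nonneg.mpr (Real.log_le_log hK.infDist_pos (hK.infDist_le_radialFn hC hαu)),
      sub_nonneg.mpr (Real.log_le_log hh hbound), by linarith⟩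

/-- optimality of the reverse radial Gauss map: if `α = α*_K` pushes
`μ` forward to `ν`, where `μ` vanishes on sets of Hausdorff dimension `≤ n-2`, then
`∫ log|⟪u, α(u)⟫| dμ ≤ ∫ log|⟪u, T(u)⟫| dμ` for every measurable `T` with `T#μ = ν`. -/
theorem stmt17 {n : ℕ} (C K : Set (E n)) (hC : IsPointedCone C) (hK : IsPseudoCone C K)
    (μ ν : Measure (E n)) [IsProbabilityMeasure μ] [IsProbabilityMeasure ν]
    (hμsupp : μ (OmegaCp C)ᶜ = 0) (hνsupp : ν (OmegaC C)ᶜ = 0)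
    (hμdim : ∀ A : Set (E n), dimH A ≤ (n : ℝ≥0∞) - 2 → μ A = 0)
    (α : E n → E n) (hαmeas : Measurable α) (hαmap : Measure.map α μ = ν)
    (hα : ∀ᵐ u ∂μ, α u ∈ OmegaC C ∧ IsNormalAt K u (radialFn K (α u) • α u))
    (T : E n → E n) (hTmeas : Measurable T) (hTmap : Measure.map T μ = ν)
    (hT : ∀ᵐ u ∂μ, T u ∈ OmegaC C) :
    eIntegral μ (fun u => Real.log |⟪u, α u⟫_ℝ|) ≤
      eIntegral μ (fun u => Real.log |⟪u, T u⟫_ℝ|) :=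
  stmt17_general C K hC hK μ ν hμsupp α hαmeas hαmap hα T hTmeas hTmap hT
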